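/- arXiv:1603.09433 — 7 statements merged into one kernel-verified Lean document; each statement's English description precedes it below -/
import Mathlib

section
/- Let M, N ≥ 1 and let a_1,...,a_p ∈ ℤ/M, b_1,...,b_p ∈ ℤ/N (indices taken cyclically mod p). Then the multiset [(a_y, b_y) : y = 1..p] equals the multiset [(a_y, b_{y+1}) : y = 1..p] if and only if for every i ∈ ℤ/M, the multiset [(i+a_y, b_y), (a_y, b_{y+1}) : y=1..p] equals the multiset [(i+a_y, b_{y+1}), (a_y, b_y) : y=1..p]. -/
/-!
Translating the first coordinate by `i` turns the left-hand equality into each of the shifted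
ones. Conversely, summing the shifted equalities over all `i` in a finite group `G`, the
translated parts add up to `G ×ˢ (values of b)`, which does not change when `b` is permuted
cyclically; what remains is `|G|` times the left-hand equality.
-/

/-- cyclic successor on `Fin p` -/
def cyc (p : ℕ) (y : Fin p) : Fin p := ⟨((y : ℕ) + 1) % p, Nat.mod_lt _ y.pos⟩

theorem cyc_eq_finRotate : ∀ p, cyc p = finRotate p
  | 0 => funext fun y => y.elim0
  | _ + 1 => funext fun y => by ext; simp [cyc, Fin.val_add]

namespace Multiset

theorem nsmul_right_injective {α : Type*} {n : ℕ} (hn : n ≠ 0) :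
    Function.Injective fun s : Multiset α => n • s := by
  classical
  intro s t h
  ext x
  simpa [hn] using congrArg (count x) h

theorem sum_univ_map_add_left {ι G B : Type*} [AddGroup G] [Fintype G] (s : Multiset ι)
    (a : ι → G) (g : ι → B) :
    ∑ i : G, s.map (fun y => (i + a y, g y)) = (Finset.univ.val : Multiset G) ×ˢ s.map g := by
  have shift (c : G) : (Finset.univ.val : Multiset G).map (· + c) = Finset.univ.val :=
    map_univ_val_equiv (Equiv.addRight c)
  calc ∑ i : G, s.map (fun y => (i + a y, g y))
      = (Finset.univ.val : Multiset G).bind fun i => s.bind fun y => {(i + a y, g y)} := by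
        simp only [bind_singleton]; rfl
    _ = s.bind fun y => (Finset.univ.val : Multiset G).bind fun i => {(i + a y, g y)} :=
        bind_bind _ _
    _ = s.bind fun y => (Finset.univ.val : Multiset G).bind fun x => {(x, g y)} := by
        congr! 1 with y
        conv_rhs => rw [← shift (a y)]
        simp only [bind_singleton, map_map, Function.comp_def]
    _ = _ := by
        rw [bind_bind]
        simp only [SProd.sprod, product, bind_singleton, map_map, Function.comp_def]

theorem map_prod_eq_iff_forall_add_left {ι G B : Type*} [AddGroup G] [Fintype G]
    (s : Multiset ι) (a : ι → G) {b b' : ι → B} (hb : s.map b = s.map b') :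
    s.map (fun y => (a y, b y)) = s.map (fun y => (a y, b' y)) ↔
      ∀ i : G, s.map (fun y => (i + a y, b y)) + s.map (fun y => (a y, b' y)) =
        s.map (fun y => (i + a y, b' y)) + s.map (fun y => (a y, b y)) := by
  constructor
  · intro h i
    have hi := congrArg (map fun z : G × B => (i + z.1, z.2)) h
    simp only [map_map, Function.comp_def] at hi
    rw [hi, h]
  · intro h
    have hsum := Finset.sum_congr rfl fun i (_ : i ∈ Finset.univ) => h i
    rw [Finset.sum_add_distrib, Finset.sum_add_distrib, sum_univ_map_add_left,
      sum_univ_map_add_left, hb, Finset.sum_const, Finset.sum_const] at hsum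
    exact (nsmul_right_injective Finset.univ_nonempty.card_pos.ne' (add_left_cancel hsum)).symm

end Multiset

theorem stmt1_general (M N p : ℕ) (hM : 1 ≤ M)
    (a : Fin p → ZMod M) (b : Fin p → ZMod N) :
    (Finset.univ.val.map fun y => (a y, b y)) =
      (Finset.univ.val.map fun y => (a y, b (cyc p y))) ↔
    ∀ i : ZMod M,
      ((Finset.univ.val.map fun y => (i + a y, b y)) +
        Finset.univ.val.map fun y => (a y, b (cyc p y))) =
      ((Finset.univ.val.map fun y => (i + a y, b (cyc p y))) +
        Finset.univ.val.map fun y => (a y, b y)) := by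
  have : NeZero M := ⟨by omega⟩
  refine Multiset.map_prod_eq_iff_forall_add_left _ a ?_
  rw [← Function.comp_def b, ← Multiset.map_map, cyc_eq_finRotate, Multiset.map_univ_val_equiv]

theorem stmt1 (M N p : ℕ) (hM : 1 ≤ M) (hN : 1 ≤ N)
    (a : Fin p → ZMod M) (b : Fin p → ZMod N) :
    (Finset.univ.val.map fun y => (a y, b y)) =
      (Finset.univ.val.map fun y => (a y, b (cyc p y))) ↔
    ∀ i : ZMod M,
      ((Finset.univ.val.map fun y => (i + a y, b y)) +
        Finset.univ.val.map fun y => (a y, b (cyc p y))) =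
      ((Finset.univ.val.map fun y => (i + a y, b (cyc p y))) +
        Finset.univ.val.map fun y => (a y, b y)) :=
  stmt1_general M N p hM a b
end

section
/- Fix p ≥ 1, M, N ≥ 1, and multi-indices a ∈ (ℤ/M)^p, b ∈ (ℤ/N)^p with [(a_y,b_y)] ≠ [(a_y,b_{y+1})] as multisets (indices cyclic mod p). For r ≥ 1 define K_p^r(a,b) = (1/M^r) · #{ (i_1,...,i_r) ∈ (ℤ/M)^r : for all x (cyclic mod r), the multiset [(i_x+a_y, b_y), (i_{x+1}+a_y, b_{y+1}) : y] equals [(i_x+a_y, b_{y+1}), (i_{x+1}+a_y, b_y) : y] }. Then K_p^r(a,b) ≤ ((M-1)/M)^{r-1}, and in particular K_p^r(a,b) → 0 as r → ∞. -/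
/-- The condition on a tuple `i = (i_1,...,i_r)` appearing in the definition of `K_p^r(a,b)`. -/
def Kcond (M N p r : ℕ) (a : Fin p → ZMod M) (b : Fin p → ZMod N)
    (i : Fin r → ZMod M) : Prop :=
  ∀ x : Fin r,
    ((Finset.univ.val.map fun y => (i x + a y, b y)) +
      Finset.univ.val.map fun y => (i (cyc r x) + a y, b (cyc p y))) =
    ((Finset.univ.val.map fun y => (i x + a y, b (cyc p y))) +
      Finset.univ.val.map fun y => (i (cyc r x) + a y, b y))

/-- `K_p^r(a,b)` -/
noncomputable def K (M N p r : ℕ) (a : Fin p → ZMod M) (b : Fin p → ZMod N) : ℝ :=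
  (Nat.card {i : Fin r → ZMod M // Kcond M N p r a b i} : ℝ) / (M : ℝ) ^ r

/-! Let `f i` be the multiplicity function of `[(i + a_y, b_y) : y]` minus that of
`[(i + a_y, b_{y+1}) : y]`. The condition defining `K_p^r(a,b)` says that `f` takes the same value
at `i_x` and `i_{x+1}`, hence is constant along the whole cycle `i_1, …, i_r`. Summed over all
shifts `i`, both families of multisets give every `(j, b_y)` once, so `∑ i, f i = 0`; as `f 0 ≠ 0`
by hypothesis, `f` is not constant. Hence every fibre of `f` has at most `M - 1` elements, and the
tuples `i` whose values lie in a single fibre number at most `M (M - 1)^(r - 1)`. -/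

open Finset

theorem card_filter_eq_le_card_sub_one {α β : Type*} [Fintype α] (g : α → β)
    (hg : ∃ u v, g u ≠ g v) (c : β) [DecidablePred (g · = c)] :
    #{x | g x = c} ≤ Fintype.card α - 1 := by
  classical
  obtain ⟨w, hw⟩ : ∃ w, g w ≠ c := by
    obtain ⟨u, v, huv⟩ := hg
    by_cases hu : g u = c
    · exact ⟨v, fun hv => huv (hu.trans hv.symm)⟩
    · exact ⟨u, hu⟩
  calc #{x | g x = c} ≤ #(univ.erase w) :=
        card_le_card fun x hx => mem_erase.2 ⟨fun h => hw (h ▸ (mem_filter.1 hx).2), mem_univ x⟩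
    _ = Fintype.card α - 1 := by rw [card_erase_of_mem (mem_univ w), card_univ]

theorem card_comp_const_le {ι α β : Type*} [Fintype ι] [Nonempty ι] [Fintype α]
    (g : α → β) (hg : ∃ u v, g u ≠ g v) :
    Nat.card {i : ι → α // ∀ x y, g (i x) = g (i y)} ≤
      Fintype.card α * (Fintype.card α - 1) ^ (Fintype.card ι - 1) := by
  classical
  obtain ⟨x₀⟩ := ‹Nonempty ι›
  let fiber : β → Finset α := fun c => {x | g x = c}
  have hsub : ({i : ι → α | ∀ x y, g (i x) = g (i y)} : Finset (ι → α)) ⊆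
      (univ.image g).biUnion fun c => Fintype.piFinset fun _ : ι => fiber c := by
    intro i hi
    simp only [mem_filter, mem_univ, true_and] at hi
    exact mem_biUnion.2 ⟨g (i x₀), mem_image_of_mem g (mem_univ _),
      Fintype.mem_piFinset.2 fun x => mem_filter.2 ⟨mem_univ _, hi x x₀⟩⟩
  have hk : Fintype.card ι = Fintype.card ι - 1 + 1 := by
    have := Fintype.card_pos (α := ι); omega
  rw [Nat.card_eq_fintype_card, Fintype.card_subtype]
  calc #({i | ∀ x y, g (i x) = g (i y)} : Finset (ι → α))
      ≤ ∑ c ∈ univ.image g, #(Fintype.piFinset fun _ : ι => fiber c) :=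
        (card_le_card hsub).trans card_biUnion_le
    _ = ∑ c ∈ univ.image g, #(fiber c) ^ (Fintype.card ι - 1) * #(fiber c) := by
        simp only [Fintype.card_piFinset, prod_const, card_univ, ← pow_succ, ← hk]
    _ ≤ ∑ c ∈ univ.image g, (Fintype.card α - 1) ^ (Fintype.card ι - 1) * #(fiber c) :=
        sum_le_sum fun c _ => by
          gcongr
          exact card_filter_eq_le_card_sub_one g hg c
    _ = Fintype.card α * (Fintype.card α - 1) ^ (Fintype.card ι - 1) := by
        rw [← mul_sum, ← card_eq_sum_card_fiberwise fun x _ => mem_image_of_mem g (mem_univ x),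
          card_univ, mul_comm]

theorem sum_map_add_univ {G ι γ : Type*} [AddGroup G] [Fintype G] [Fintype ι]
    (a : ι → G) (c : ι → γ) :
    ∑ i : G, univ.val.map (fun y => (i + a y, c y)) =
      univ.val.map (fun q : G × ι => (q.1, c q.2)) := by
  let e : G × ι ≃ G × ι :=
    { toFun := fun q => (q.1 + a q.2, q.2), invFun := fun q => (q.1 - a q.2, q.2)
      left_inv := fun q => by simp, right_inv := fun q => by simp }
  rw [← Multiset.map_univ_val_equiv e, Multiset.map_map, ← univ_product_univ, product_val]
  simp only [SProd.sprod, Multiset.product, Multiset.map_bind, Multiset.map_map]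
  rw [Multiset.bind, Multiset.join]
  rfl

theorem cyc_castSucc (n : ℕ) (k : Fin n) : cyc (n + 1) k.castSucc = k.succ := by
  ext; simp [cyc, Nat.mod_eq_of_lt]

theorem cyc_bijective (p : ℕ) : Function.Bijective (cyc p) := by
  cases p with
  | zero => exact ⟨fun x => x.elim0, fun x => x.elim0⟩
  | succ n =>
    have : cyc (n + 1) = (· + 1) := by
      funext y; ext; simp [cyc, Fin.val_add]
    rw [this]; exact (Equiv.addRight 1).bijective

theorem eq_of_forall_eq_cyc {α : Type*} {r : ℕ} {f : Fin r → α}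
    (h : ∀ x, f x = f (cyc r x)) (x y : Fin r) : f x = f y := by
  cases r with
  | zero => exact x.elim0
  | succ n =>
    have hf : ∀ k, f k = f 0 := Fin.induction rfl fun k ih => by
      rw [← cyc_castSucc, ← h, ih]
    rw [hf x, hf y]

def signedCount (M N p : ℕ) (a : Fin p → ZMod M) (b : Fin p → ZMod N) (i : ZMod M)
    (z : ZMod M × ZMod N) : ℤ :=
  ((univ.val.map fun y => (i + a y, b y)).count z : ℤ) -
    ((univ.val.map fun y => (i + a y, b (cyc p y))).count z : ℤ)

variable {M N p : ℕ} (a : Fin p → ZMod M) (b : Fin p → ZMod N)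

theorem kcond_iff_signedCount_eq {r : ℕ} (i : Fin r → ZMod M) :
    Kcond M N p r a b i ↔
      ∀ x, signedCount M N p a b (i x) = signedCount M N p a b (i (cyc r x)) := by
  refine forall_congr' fun x => ⟨fun h => funext fun z => ?_, fun h => Multiset.ext.2 fun z => ?_⟩
  · have hz := congrArg (Multiset.count z) h
    simp only [Multiset.count_add] at hz
    simp only [signedCount]
    omega
  · have hz := congrFun h z
    simp only [signedCount] at hz
    simp only [Multiset.count_add]
    omega

theorem sum_signedCount_eq_zero [NeZero M] (z : ZMod M × ZMod N) :
    ∑ i, signedCount M N p a b i z = 0 := by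
  have hshift : univ.val.map (fun q : ZMod M × Fin p => (q.1, b (cyc p q.2))) =
      univ.val.map (fun q : ZMod M × Fin p => (q.1, b q.2)) := by
    conv_rhs => rw [← Multiset.map_univ_val_equiv
      ((Equiv.refl (ZMod M)).prodCongr (Equiv.ofBijective _ (cyc_bijective p))), Multiset.map_map]
    rfl
  simp only [signedCount, sum_sub_distrib, ← Nat.cast_sum, ← Multiset.count_sum',
    sum_map_add_univ a, hshift, sub_self]

theorem exists_signedCount_ne [NeZero M]
    (hab : (univ.val.map fun y => (a y, b y)) ≠ (univ.val.map fun y => (a y, b (cyc p y)))) :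
    ∃ u v, signedCount M N p a b u ≠ signedCount M N p a b v := by
  by_contra! hconst
  refine hab (Multiset.ext.2 fun z => ?_)
  have hsum := sum_signedCount_eq_zero a b z
  rw [sum_congr rfl fun i _ => congrFun (hconst i 0) z, sum_const, card_univ, ZMod.card,
    nsmul_eq_mul, mul_eq_zero, Nat.cast_eq_zero] at hsum
  have h0 := hsum.resolve_left (NeZero.ne M)
  simp only [signedCount, zero_add] at h0
  omega

theorem K_le (hM : 1 ≤ M)
    (hab : (univ.val.map fun y => (a y, b y)) ≠ (univ.val.map fun y => (a y, b (cyc p y))))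
    {r : ℕ} (hr : 1 ≤ r) : K M N p r a b ≤ (((M : ℝ) - 1) / M) ^ (r - 1) := by
  have : NeZero M := ⟨by omega⟩
  have : Nonempty (Fin r) := ⟨⟨0, hr⟩⟩
  have hcard : Nat.card {i : Fin r → ZMod M // Kcond M N p r a b i} ≤ M * (M - 1) ^ (r - 1) :=
    calc Nat.card {i : Fin r → ZMod M // Kcond M N p r a b i}
        ≤ Nat.card {i : Fin r → ZMod M //
            ∀ x y, signedCount M N p a b (i x) = signedCount M N p a b (i y)} :=
          Nat.card_le_card_of_injective
            (Subtype.map id fun i hi => eq_of_forall_eq_cyc ((kcond_iff_signedCount_eq a b i).1 hi))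
            (Subtype.map_injective _ Function.injective_id)
      _ ≤ M * (M - 1) ^ (r - 1) := by
          simpa only [ZMod.card, Fintype.card_fin] using
            card_comp_const_le (ι := Fin r) _ (exists_signedCount_ne a b hab)
  calc K M N p r a b ≤ ((M * (M - 1) ^ (r - 1) : ℕ) : ℝ) / (M : ℝ) ^ r := by
        unfold K; gcongr
    _ = (((M : ℝ) - 1) / M) ^ (r - 1) := by
        obtain ⟨k, rfl⟩ : ∃ k, r = k + 1 := ⟨r - 1, by omega⟩
        rw [Nat.cast_mul, Nat.cast_pow, Nat.cast_sub hM, Nat.cast_one, Nat.add_sub_cancel,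
          div_pow, pow_succ]
        field_simp

theorem stmt2_general (M N p : ℕ) (hM : 1 ≤ M)
    (a : Fin p → ZMod M) (b : Fin p → ZMod N)
    (hab : (Finset.univ.val.map fun y => (a y, b y)) ≠
      (Finset.univ.val.map fun y => (a y, b (cyc p y)))) :
    (∀ r : ℕ, 1 ≤ r → K M N p r a b ≤ (((M : ℝ) - 1) / M) ^ (r - 1)) ∧
    Filter.Tendsto (fun r => K M N p r a b) Filter.atTop (nhds 0) := by
  have hbound : ∀ r : ℕ, 1 ≤ r → K M N p r a b ≤ (((M : ℝ) - 1) / M) ^ (r - 1) :=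
    fun r hr => K_le a b hM hab hr
  refine ⟨hbound, ?_⟩
  have hMpos : (0 : ℝ) < M := by exact_mod_cast hM
  have hratio : Filter.Tendsto (fun r : ℕ => (((M : ℝ) - 1) / M) ^ (r - 1)) Filter.atTop (nhds 0) :=
    (tendsto_pow_atTop_nhds_zero_of_lt_one
      (div_nonneg (sub_nonneg.2 (by exact_mod_cast hM)) hMpos.le)
      ((div_lt_one hMpos).2 (sub_lt_self _ one_pos))).comp (Filter.tendsto_sub_atTop_nat 1)
  refine tendsto_of_tendsto_of_tendsto_of_le_of_le' tendsto_const_nhds hratio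
    (Filter.Eventually.of_forall fun r => by unfold K; positivity) ?_
  filter_upwards [Filter.eventually_ge_atTop 1] using hbound

theorem stmt2 (M N p : ℕ) (hM : 1 ≤ M) (hN : 1 ≤ N) (hp : 1 ≤ p)
    (a : Fin p → ZMod M) (b : Fin p → ZMod N)
    (hab : (Finset.univ.val.map fun y => (a y, b y)) ≠
      (Finset.univ.val.map fun y => (a y, b (cyc p y)))) :
    (∀ r : ℕ, 1 ≤ r → K M N p r a b ≤ (((M : ℝ) - 1) / M) ^ (r - 1)) ∧
    Filter.Tendsto (fun r => K M N p r a b) Filter.atTop (nhds 0) :=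
  stmt2_general M N p hM a b hab
end

section
/- Fix p ≥ 1, M, N ≥ 1, and let S ⊆ ℤ/M be the set of i such that the multiset [(i+a_y,b_y),(a_y,b_{y+1}) : y] equals [(i+a_y,b_{y+1}),(a_y,b_y) : y]. Then the set of tuples (i_1,...,i_r) ∈ (ℤ/M)^r satisfying, for all cyclic x, [(i_x+a_y,b_y),(i_{x+1}+a_y,b_{y+1})] = [(i_x+a_y,b_{y+1}),(i_{x+1}+a_y,b_y)], is contained in { (i_1,...,i_r) : i_2 - i_1 ∈ S, ..., i_r - i_1 ∈ S }, hence has cardinality at most M·|S|^{r-1}. -/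
section ShiftFst

variable {G β : Type*} [AddCommGroup G]

def shiftFst (c : G) (s : Multiset (G × β)) : Multiset (G × β) :=
  s.map fun z => (c + z.1, z.2)

@[simp]
lemma shiftFst_zero (s : Multiset (G × β)) : shiftFst 0 s = s := by
  simp [shiftFst]

@[simp]
lemma shiftFst_shiftFst (c d : G) (s : Multiset (G × β)) :
    shiftFst c (shiftFst d s) = shiftFst (c + d) s := by
  simp [shiftFst, Multiset.map_map, add_assoc]

@[simp]
lemma shiftFst_add (c : G) (s t : Multiset (G × β)) :
    shiftFst c (s + t) = shiftFst c s + shiftFst c t :=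
  Multiset.map_add _ _ _

lemma shiftFst_injective (c : G) : Function.Injective (shiftFst (β := β) c) := fun s t h => by
  simpa using congrArg (shiftFst (-c)) h

lemma shiftFst_map {ι : Type*} (c : G) (u : Multiset ι) (f : ι → G) (g : ι → β) :
    shiftFst c (u.map fun y => (f y, g y)) = u.map fun y => (c + f y, g y) := by
  simp [shiftFst, Multiset.map_map]

def balancedShifts (F H : Multiset (G × β)) : AddSubgroup G where
  carrier := {d | shiftFst d F + H = shiftFst d H + F}
  zero_mem' := by simp [add_comm]
  add_mem' {d e} hd he := by
    have he' := congrArg (shiftFst d) he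
    simp only [Set.mem_ofPred_eq, shiftFst_add, shiftFst_shiftFst] at hd he' ⊢
    apply add_right_cancel (b := shiftFst d F + shiftFst d H)
    calc shiftFst (d + e) F + H + (shiftFst d F + shiftFst d H)
        = (shiftFst (d + e) F + shiftFst d H) + (shiftFst d F + H) := by abel
      _ = (shiftFst (d + e) H + shiftFst d F) + (shiftFst d H + F) := by rw [he', hd]
      _ = shiftFst (d + e) H + F + (shiftFst d F + shiftFst d H) := by abel
  neg_mem' {d} hd := by
    have h := congrArg (shiftFst (-d)) hd
    simp only [Set.mem_ofPred_eq, shiftFst_add, shiftFst_shiftFst, neg_add_cancel,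
      shiftFst_zero] at h ⊢
    rw [add_comm, ← h, add_comm]

lemma mem_balancedShifts {F H : Multiset (G × β)} {d : G} :
    d ∈ balancedShifts F H ↔ shiftFst d F + H = shiftFst d H + F :=
  Iff.rfl

lemma shiftFst_add_shiftFst_eq_iff (F H : Multiset (G × β)) (c d : G) :
    shiftFst c F + shiftFst d H = shiftFst c H + shiftFst d F ↔
      c - d ∈ balancedShifts F H := by
  conv_rhs => rw [mem_balancedShifts, ← (shiftFst_injective d).eq_iff]
  simp only [shiftFst_add, shiftFst_shiftFst, add_sub_cancel]

end ShiftFst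

lemma eq_of_comp_cyc_eq {α : Type*} {r : ℕ} (f : Fin r → α) (hf : ∀ x, f (cyc r x) = f x)
    (hr : 0 < r) (x : Fin r) : f x = f ⟨0, hr⟩ := by
  obtain ⟨k, hk⟩ := x
  induction k with
  | zero => rfl
  | succ k ih =>
    have hcyc : cyc r ⟨k, by omega⟩ = ⟨k + 1, hk⟩ := by simp [cyc, Nat.mod_eq_of_lt hk]
    rw [← hcyc, hf, ih]

lemma card_setOf_sub_mem_le {G ι : Type*} [AddCommGroup G] [Finite G] [Fintype ι]
    (S : Set G) (x₀ : ι) :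
    Nat.card {i : ι → G | ∀ x, i x - i x₀ ∈ S} ≤
      Nat.card G * Nat.card S ^ (Fintype.card ι - 1) := by
  classical
  let f : {i : ι → G | ∀ x, i x - i x₀ ∈ S} → G × ({x // x ≠ x₀} → S) :=
    fun i => (i.1 x₀, fun x => ⟨i.1 x - i.1 x₀, i.2 x⟩)
  have hf : Function.Injective f := by
    rintro ⟨i, hi⟩ ⟨j, hj⟩ hij
    simp only [f, Prod.mk.injEq, funext_iff, Subtype.mk.injEq] at hij
    ext x
    by_cases hx : x = x₀
    · exact hx ▸ hij.1
    · simpa [hij.1] using hij.2 ⟨x, hx⟩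
  calc _ ≤ _ := Nat.card_le_card_of_injective f hf
    _ = _ := by
      rw [Nat.card_prod, Nat.card_fun, Nat.card_eq_fintype_card (α := {x // x ≠ x₀}),
        Fintype.card_subtype_compl, Fintype.card_subtype_eq]

theorem stmt3_general (M N p r : ℕ) (hM : 1 ≤ M) (hr : 1 ≤ r)
    (a : Fin p → ZMod M) (b : Fin p → ZMod N)
    (S : Set (ZMod M))
    (hS : S = {i : ZMod M |
      ((Finset.univ.val.map fun y => (i + a y, b y)) +
        Finset.univ.val.map fun y => (a y, b (cyc p y))) =
      ((Finset.univ.val.map fun y => (i + a y, b (cyc p y))) +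
        Finset.univ.val.map fun y => (a y, b y))})
    (A : Set (Fin r → ZMod M))
    (hA : A = {i : Fin r → ZMod M | ∀ x : Fin r,
      ((Finset.univ.val.map fun y => (i x + a y, b y)) +
        Finset.univ.val.map fun y => (i (cyc r x) + a y, b (cyc p y))) =
      ((Finset.univ.val.map fun y => (i x + a y, b (cyc p y))) +
        Finset.univ.val.map fun y => (i (cyc r x) + a y, b y))}) :
    A ⊆ {i : Fin r → ZMod M | ∀ x : Fin r, i x - i ⟨0, hr⟩ ∈ S} ∧
    Nat.card A ≤ M * (Nat.card S) ^ (r - 1) := by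
  have : NeZero M := ⟨by omega⟩
  set K := balancedShifts (Finset.univ.val.map fun y => (a y, b y))
    (Finset.univ.val.map fun y => (a y, b (cyc p y)))
  have hSK : S = K := by
    ext d
    rw [hS, SetLike.mem_coe, mem_balancedShifts, shiftFst_map, shiftFst_map]
    rfl
  have hsub : A ⊆ {i | ∀ x, i x - i ⟨0, hr⟩ ∈ S} := by
    intro i hi x
    rw [hA] at hi
    have hstep (x : Fin r) : (i (cyc r x) : ZMod M ⧸ K) = i x := by
      rw [eq_comm, QuotientAddGroup.eq_iff_sub_mem, ← shiftFst_add_shiftFst_eq_iff]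
      simpa only [shiftFst_map] using hi x
    rw [hSK, SetLike.mem_coe, ← QuotientAddGroup.eq_iff_sub_mem]
    exact eq_of_comp_cyc_eq (fun x => (i x : ZMod M ⧸ K)) hstep hr x
  refine ⟨hsub, (Nat.card_mono (Set.toFinite _) hsub).trans ?_⟩
  simpa using card_setOf_sub_mem_le S (⟨0, hr⟩ : Fin r)

theorem stmt3 (M N p r : ℕ) (hM : 1 ≤ M) (hN : 1 ≤ N) (hp : 1 ≤ p) (hr : 1 ≤ r)
    (a : Fin p → ZMod M) (b : Fin p → ZMod N)
    (S : Set (ZMod M))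
    (hS : S = {i : ZMod M |
      ((Finset.univ.val.map fun y => (i + a y, b y)) +
        Finset.univ.val.map fun y => (a y, b (cyc p y))) =
      ((Finset.univ.val.map fun y => (i + a y, b (cyc p y))) +
        Finset.univ.val.map fun y => (a y, b y))})
    (A : Set (Fin r → ZMod M))
    (hA : A = {i : Fin r → ZMod M | ∀ x : Fin r,
      ((Finset.univ.val.map fun y => (i x + a y, b y)) +
        Finset.univ.val.map fun y => (i (cyc r x) + a y, b (cyc p y))) =
      ((Finset.univ.val.map fun y => (i x + a y, b (cyc p y))) +
        Finset.univ.val.map fun y => (i (cyc r x) + a y, b y))}) :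
    A ⊆ {i : Fin r → ZMod M | ∀ x : Fin r, i x - i ⟨0, hr⟩ ∈ S} ∧
    Nat.card A ≤ M * (Nat.card S) ^ (r - 1) :=
  stmt3_general M N p r hM hr a b S hS A hA
end

section
/- For any M, N ≥ 1 and p ≥ 1: δ_p(M,N) = (1/(MN)^p) · Σ_{(π,σ)} M!/(M−|π|)! · N!/(N−|σ|)!, where the sum is over pairs of set partitions π, σ of {1,...,p} with |π| ≤ M, |σ| ≤ N, satisfying the compatibility condition π ▷ σ: for every block β of π and every block γ of σ, |β ∩ γ| = |(β−1) ∩ γ| (where β−1 is the cyclic shift of β by −1 modulo p). -/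
/-- cyclic predecessor on `Fin p` -/
def cycPred (p : ℕ) (y : Fin p) : Fin p := ⟨((y : ℕ) + p - 1) % p, Nat.mod_lt _ y.pos⟩

/-- `δ_p(M,N)` -/
noncomputable def delta (M N p : ℕ) : ℝ :=
  (Nat.card {ab : (Fin p → ZMod M) × (Fin p → ZMod N) //
    (Finset.univ.val.map fun y => (ab.1 y, ab.2 y)) =
    (Finset.univ.val.map fun y => (ab.1 y, ab.2 (cyc p y)))} : ℝ) / ((M : ℝ) * N) ^ p

/-- the compatibility condition `π ▷ σ` -/
def tri (p : ℕ) (π σ : Finpartition (Finset.univ : Finset (Fin p))) : Prop :=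
  ∀ β ∈ π.parts, ∀ γ ∈ σ.parts, (β ∩ γ).card = (β.image (cycPred p) ∩ γ).card

instance (p : ℕ) (π σ : Finpartition (Finset.univ : Finset (Fin p))) :
    Decidable (tri p π σ) := by unfold tri; infer_instance


/-!
A pair `(a, b)` satisfies the multiset identity iff, for all values `u, v`, the fibres
`A = a⁻¹ u` and `B = b⁻¹ v` satisfy `|A ∩ B| = |{y ∈ A | y + 1 ∈ B}| = |(A + 1) ∩ B|`; that is,
iff the kernel partitions of `a` and `b` are compatible for the shift `y ↦ y + 1`. Grouping the
pairs by their kernels, and using that the maps `Fin p → ZMod M` with kernel `π` are the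
injections of the blocks of `π` into `ZMod M`, gives the sum with `y ↦ y + 1` in place of
`y ↦ y - 1`. Reversing the indices, `y ↦ p - 1 - y`, conjugates one shift into the other.
-/

open Finset Function

theorem Nat.mod_eq_ite_of_lt_two_mul {x p : ℕ} (h : x < 2 * p) :
    x % p = if x < p then x else x - p := by
  split_ifs with hx
  · exact Nat.mod_eq_of_lt hx
  · rw [Nat.mod_eq_sub_mod (by omega), Nat.mod_eq_of_lt (by omega)]

section Cyclic

variable {p : ℕ}

theorem cyc_cycPred (y : Fin p) : cyc p (cycPred p y) = y := by
  have := y.2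
  ext
  simp only [cyc, cycPred]
  rw [Nat.mod_eq_ite_of_lt_two_mul (x := y + p - 1) (by omega)]
  split_ifs <;> rw [Nat.mod_eq_ite_of_lt_two_mul (by omega)] <;> split_ifs <;> omega

theorem cycPred_injective : Injective (cycPred p) :=
  LeftInverse.injective cyc_cycPred

theorem rev_cyc (y : Fin p) : (cyc p y).rev = cycPred p y.rev := by
  have := y.2
  ext
  simp only [cyc, cycPred, Fin.val_rev]
  rw [Nat.mod_eq_ite_of_lt_two_mul (x := y + 1) (by omega),
    Nat.mod_eq_ite_of_lt_two_mul (by omega)]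
  split_ifs <;> omega

end Cyclic

noncomputable def Function.Surjective.equivEmbeddingOfKer {ι Q X : Type*} {q : ι → Q}
    (hq : Surjective q) :
    {f : ι → X // ∀ a b, q a = q b ↔ f a = f b} ≃ (Q ↪ X) where
  toFun f := ⟨f.1 ∘ surjInv hq, fun x y hxy => by
    simpa [surjInv_eq] using (f.2 _ _).2 hxy⟩
  invFun g := ⟨g ∘ q, fun _ _ => g.injective.eq_iff.symm⟩
  left_inv f := Subtype.ext <| funext fun a => (f.2 _ _).1 (surjInv_eq hq (q a))
  right_inv g := Embedding.ext fun x => congrArg g (surjInv_eq hq x)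

namespace Finpartition

variable {ι X : Type*} [Fintype ι] [DecidableEq ι] [DecidableEq X]

instance (f : ι → X) : DecidableRel (Setoid.ker f) := fun a b => decEq (f a) (f b)

def ker (f : ι → X) : Finpartition (univ : Finset ι) :=
  ofSetoid (Setoid.ker f)

theorem mem_part_ker {f : ι → X} {a b : ι} : b ∈ (ker f).part a ↔ f a = f b :=
  mem_part_ofSetoid_iff_rel

theorem parts_ker (f : ι → X) :
    (ker f).parts = univ.image fun a => ({b | f b = f a} : Finset ι) := by
  simp only [ker, ofSetoid, ofSetSetoid_parts, Setoid.ker_def, eq_comm]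

theorem mem_parts_iff_exists_part_eq (P : Finpartition (univ : Finset ι)) {t : Finset ι} :
    t ∈ P.parts ↔ ∃ a, P.part a = t :=
  ⟨fun ht => (P.nonempty_of_mem_parts ht).imp fun _ ha => P.part_eq_of_mem ht ha,
    fun ⟨a, ha⟩ => ha ▸ P.part_mem.2 (mem_univ a)⟩

theorem ext_part {P Q : Finpartition (univ : Finset ι)} (h : ∀ a, P.part a = Q.part a) :
    P = Q := by
  ext t
  simp only [mem_parts_iff_exists_part_eq, h]

theorem ker_eq_iff {f : ι → X} {P : Finpartition (univ : Finset ι)} :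
    ker f = P ↔ ∀ a b, P.part a = P.part b ↔ f a = f b := by
  constructor
  · rintro rfl a b
    rw [← (ker f).mem_part_iff_part_eq_part (mem_univ a) (mem_univ b), mem_part_ker, eq_comm]
  · intro h
    refine ext_part fun a => Finset.ext fun b => ?_
    rw [mem_part_ker, P.mem_part_iff_part_eq_part (mem_univ b) (mem_univ a), h, eq_comm]

theorem card_ker_eq [Fintype X] (P : Finpartition (univ : Finset ι)) :
    #{f : ι → X | ker f = P} = (Fintype.card X).descFactorial #P.parts := by
  have hq : Surjective fun a => (⟨P.part a, P.part_mem.2 (mem_univ a)⟩ : P.parts) :=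
    fun t => (P.mem_parts_iff_exists_part_eq.1 t.2).imp fun _ ha => Subtype.ext ha
  rw [← Fintype.card_subtype, ← Fintype.card_coe P.parts, ← Fintype.card_embedding_eq]
  refine Fintype.card_congr <| (Equiv.subtypeEquivRight fun f => ?_).trans
    hq.equivEmbeddingOfKer
  simp only [ker_eq_iff, Subtype.mk.injEq]

def ShiftCompatible (e : ι → ι) (P Q : Finpartition (univ : Finset ι)) : Prop :=
  ∀ β ∈ P.parts, ∀ γ ∈ Q.parts, #(β ∩ γ) = #(β.image e ∩ γ)

instance (e : ι → ι) (P Q : Finpartition (univ : Finset ι)) :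
    Decidable (ShiftCompatible e P Q) := by
  unfold ShiftCompatible; infer_instance

end Finpartition

theorem Finset.card_filter_apply_mem {α β : Type*} [DecidableEq β] {f : α → β}
    (hf : Injective f) (A : Finset α) (B : Finset β) : #{x ∈ A | f x ∈ B} = #(A.image f ∩ B) := by
  rw [← filter_mem_eq_inter, filter_image, card_image_of_injective _ hf]

section ShiftBalanced

open Finpartition

variable {ι X Y : Type*} [Fintype ι]

def IsShiftBalanced (s : ι → ι) (a : ι → X) (b : ι → Y) : Prop :=
  univ.val.map (fun y => (a y, b y)) = univ.val.map (fun y => (a y, b (s y)))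

theorem isShiftBalanced_comp_iff (r : ι ≃ ι) {s t : ι → ι} (h : Semiconj r t s)
    (a : ι → X) (b : ι → Y) : IsShiftBalanced t (a ∘ r) (b ∘ r) ↔ IsShiftBalanced s a b := by
  have hr (g : ι → X × Y) : univ.val.map (fun y => g (r y)) = univ.val.map g := by
    have := Multiset.map_map g r univ.val
    rwa [Multiset.map_univ_val_equiv, eq_comm] at this
  simp only [IsShiftBalanced, comp_apply, h.eq, hr fun y => (a y, b y), hr fun y => (a y, b (s y))]

theorem card_isShiftBalanced_of_semiconj (r : ι ≃ ι) {s t : ι → ι} (h : Semiconj r t s) :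
    Nat.card {ab : (ι → X) × (ι → Y) // IsShiftBalanced t ab.1 ab.2} =
      Nat.card {ab : (ι → X) × (ι → Y) // IsShiftBalanced s ab.1 ab.2} :=
  Nat.card_congr <| .symm <|
    ((r.symm.arrowCongr (.refl X)).prodCongr (r.symm.arrowCongr (.refl Y))).subtypeEquiv
      fun ab => (isShiftBalanced_comp_iff r h ab.1 ab.2).symm

variable [DecidableEq ι] [DecidableEq X] [DecidableEq Y]

theorem count_map_shift {s : ι → ι} (hs : Injective s) (a : ι → X) (b : ι → Y) (u : X) (v : Y) :
    (univ.val.map fun y => (a y, b (s y))).count (u, v) =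
      #(({y | a y = u} : Finset ι).image s ∩ ({y | b y = v} : Finset ι)) := by
  rw [← card_filter_apply_mem hs, Multiset.count_map, ← filter_val, filter_filter]
  congr 2
  ext y
  simp only [mem_filter, mem_univ, true_and, Prod.mk.injEq, eq_comm]

theorem isShiftBalanced_iff_shiftCompatible {s : ι → ι} (hs : Injective s) (a : ι → X)
    (b : ι → Y) : IsShiftBalanced s a b ↔ ShiftCompatible s (ker a) (ker b) := by
  have hid := count_map_shift injective_id a b
  simp only [id, image_id] at hid
  simp only [IsShiftBalanced, Multiset.ext, Prod.forall, hid, count_map_shift hs,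
    ShiftCompatible, parts_ker, forall_mem_image, mem_univ, forall_const]
  refine ⟨fun h x z => h (a x) (b z), fun h u v => ?_⟩
  -- a value outside the range of `a` (or `b`) has an empty fibre, not a block
  rcases ({y | a y = u} : Finset ι).eq_empty_or_nonempty with hu | ⟨x, hx⟩
  · simp [hu]
  rcases ({y | b y = v} : Finset ι).eq_empty_or_nonempty with hv | ⟨z, hz⟩
  · simp [hv]
  rw [mem_filter] at hx hz
  rw [← hx.2, ← hz.2]
  exact @h x z

theorem card_isShiftBalanced [Fintype X] [Fintype Y] {s : ι → ι} (hs : Injective s) :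
    Nat.card {ab : (ι → X) × (ι → Y) // IsShiftBalanced s ab.1 ab.2} =
      ∑ P : Finpartition (univ : Finset ι), ∑ Q : Finpartition (univ : Finset ι),
        if ShiftCompatible s P Q then
          (Fintype.card X).descFactorial #P.parts * (Fintype.card Y).descFactorial #Q.parts
        else 0 := by
  classical
  rw [Nat.card_eq_fintype_card, Fintype.card_subtype,
    card_eq_sum_card_fiberwise (f := fun ab => (ker ab.1, ker ab.2)) (t := univ)
      fun _ _ => mem_coe.2 (mem_univ _), Fintype.sum_prod_type]
  refine sum_congr rfl fun P _ => sum_congr rfl fun Q _ => ?_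
  rw [filter_filter]
  split_ifs with hPQ
  · rw [← card_ker_eq P, ← card_ker_eq Q, ← card_product, ← filter_product, univ_product_univ]
    congr 1
    ext ⟨a, b⟩
    simp only [mem_filter, mem_univ, true_and, Prod.mk.injEq, and_iff_right_iff_imp]
    rintro ⟨rfl, rfl⟩
    exact (isShiftBalanced_iff_shiftCompatible hs a b).2 hPQ
  · rw [card_eq_zero, filter_eq_empty_iff]
    rintro ⟨a, b⟩ - ⟨hab, hker⟩
    obtain ⟨rfl, rfl⟩ := Prod.mk.inj hker
    exact hPQ ((isShiftBalanced_iff_shiftCompatible hs a b).1 hab)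

end ShiftBalanced

theorem stmt9_general (M N p : ℕ) (hM : 1 ≤ M) (hN : 1 ≤ N) :
    delta M N p = (1 / ((M : ℝ) * N) ^ p) *
      ∑ π : Finpartition (Finset.univ : Finset (Fin p)),
        ∑ σ : Finpartition (Finset.univ : Finset (Fin p)),
          if tri p π σ then
            (M.descFactorial π.parts.card : ℝ) * (N.descFactorial σ.parts.card : ℝ)
          else 0 := by
  have : NeZero M := ⟨by omega⟩
  have : NeZero N := ⟨by omega⟩
  calc delta M N p = (Nat.card {ab : (Fin p → ZMod M) × (Fin p → ZMod N) //
        IsShiftBalanced (cyc p) ab.1 ab.2} : ℝ) / ((M : ℝ) * N) ^ p := rfl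
    _ = _ := by
      rw [card_isShiftBalanced_of_semiconj Fin.revPerm rev_cyc,
        card_isShiftBalanced cycPred_injective, ZMod.card, ZMod.card, one_div_mul_eq_div]
      push_cast
      -- `tri p` unfolds to `ShiftCompatible (cycPred p)`
      rfl

/-- terms with `|π| > M` or `|σ| > N` vanish, since then the
descending factorial `M!/(M-|π|)!` is zero. -/
theorem stmt9 (M N p : ℕ) (hM : 1 ≤ M) (hN : 1 ≤ N) (hp : 1 ≤ p) :
    delta M N p = (1 / ((M : ℝ) * N) ^ p) *
      ∑ π : Finpartition (Finset.univ : Finset (Fin p)),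
        ∑ σ : Finpartition (Finset.univ : Finset (Fin p)),
          if tri p π σ then
            (M.descFactorial π.parts.card : ℝ) * (N.descFactorial σ.parts.card : ℝ)
          else 0 :=
  stmt9_general M N p hM hN
end

section
/- For a ∈ (ℤ/M)^p, b ∈ (ℤ/N)^p, the cyclic multiset condition [(a_y, b_y) : y = 1..p] = [(a_y, b_{y+1}) : y = 1..p] depends only on the kernel partitions ker a and ker b (the partitions of {1,...,p} determined by which coordinates are equal); that is, if ker a = ker a' and ker b = ker b' then (a,b) satisfies the condition iff (a',b') does. -/
section

variable {ι α β α' β' : Type*}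

lemma Multiset.map_pair_eq_map_pair_comp_of_factorsThrough [Nonempty α'] [Nonempty β']
    (s : Multiset ι) (σ : ι → ι) {a : ι → α} {b : ι → β} {a' : ι → α'} {b' : ι → β'}
    (ha : a'.FactorsThrough a) (hb : b'.FactorsThrough b)
    (h : s.map (fun y => (a y, b y)) = s.map (fun y => (a y, b (σ y)))) :
    s.map (fun y => (a' y, b' y)) = s.map (fun y => (a' y, b' (σ y))) := by
  obtain ⟨f, hf⟩ : ∃ f : α → α', f ∘ a = a' :=
    ⟨_, ha.extend_comp fun _ => Classical.ofNonempty⟩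
  obtain ⟨g, hg⟩ : ∃ g : β → β', g ∘ b = b' :=
    ⟨_, hb.extend_comp fun _ => Classical.ofNonempty⟩
  subst hf hg
  have image (τ : ι → ι) : s.map (fun y => ((f ∘ a) y, (g ∘ b) (τ y))) =
      (s.map fun y => (a y, b (τ y))).map (Prod.map f g) := by
    rw [Multiset.map_map]; rfl
  exact (image id).trans ((congrArg (Multiset.map (Prod.map f g)) h).trans (image σ).symm)

lemma Multiset.map_pair_eq_map_pair_comp_iff_of_ker_eq [Nonempty α] [Nonempty β]
    [Nonempty α'] [Nonempty β'] (s : Multiset ι) (σ : ι → ι)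
    {a : ι → α} {b : ι → β} {a' : ι → α'} {b' : ι → β'}
    (ha : ∀ y z, a y = a z ↔ a' y = a' z) (hb : ∀ y z, b y = b z ↔ b' y = b' z) :
    s.map (fun y => (a y, b y)) = s.map (fun y => (a y, b (σ y))) ↔
      s.map (fun y => (a' y, b' y)) = s.map (fun y => (a' y, b' (σ y))) :=
  ⟨map_pair_eq_map_pair_comp_of_factorsThrough s σ (fun y z => (ha y z).1) fun y z => (hb y z).1,
    map_pair_eq_map_pair_comp_of_factorsThrough s σ (fun y z => (ha y z).2) fun y z => (hb y z).2⟩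

end

/-- the cyclic multiset condition only depends on the kernel partitions. -/
theorem stmt10 (M N M' N' p : ℕ)
    (a : Fin p → ZMod M) (b : Fin p → ZMod N)
    (a' : Fin p → ZMod M') (b' : Fin p → ZMod N')
    (ha : ∀ y z : Fin p, a y = a z ↔ a' y = a' z)
    (hb : ∀ y z : Fin p, b y = b z ↔ b' y = b' z) :
    ((Finset.univ.val.map fun y => (a y, b y)) =
      (Finset.univ.val.map fun y => (a y, b (cyc p y)))) ↔
    ((Finset.univ.val.map fun y => (a' y, b' y)) =
      (Finset.univ.val.map fun y => (a' y, b' (cyc p y)))) :=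
  Multiset.map_pair_eq_map_pair_comp_iff_of_ker_eq _ (cyc p) ha hb
end

section
/- For any real α and as p → ∞, (1/2^p) · Σ_{s=0}^{p} C(p,s) · s^α ∼ (p/2)^α, i.e. the ratio of the two sides tends to 1. (For α < 0 the term s = 0 is interpreted as contributing 0.) -/
/-!
With `S` binomial `(p, 1/2)`, the normalized sum is `E[(2S/p)^α]`. As `x ↦ x^α` is continuous at
`1`, the part of the expectation where `|2S/p - 1| ≤ ε` is within `δ` of `1`. Off that window,
`(2S/p)^α ≤ 2^|α|` while `S > p/4`, and Chebyshev's inequality (`Var(2S/p) = 1/p`) bounds the mass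
there by `O(1/p)`; for `S ≤ p/4`, where `(2S/p)^α` may be as large as `p^|α|`, an exponential-moment
bound gives mass at most `(337/384)^p`.
-/

open Finset Filter Topology

theorem sum_filter_mul_le_mul_sum {ι : Type*} {s t : Finset ι} (hst : s ⊆ t) {w f : ι → ℝ}
    {M : ℝ} (hw : ∀ i ∈ t, 0 ≤ w i) (hM : 0 ≤ M) (hf : ∀ i ∈ s, f i ≤ M) :
    ∑ i ∈ s, w i * f i ≤ M * ∑ i ∈ t, w i := calc
  ∑ i ∈ s, w i * f i ≤ ∑ i ∈ s, w i * M :=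
      sum_le_sum fun i hi => mul_le_mul_of_nonneg_left (hf i hi) (hw i (hst hi))
  _ ≤ ∑ i ∈ t, w i * M :=
      sum_le_sum_of_subset_of_nonneg hst fun i hi _ => mul_nonneg (hw i hi) hM
  _ = M * ∑ i ∈ t, w i := by rw [← sum_mul, mul_comm]

theorem abs_sum_mul_sub_le_add_sum_filter_not {ι : Type*} (t : Finset ι) (P : ι → Prop)
    [DecidablePred P] {w g : ι → ℝ} {c δ : ℝ} (hδ : 0 ≤ δ) (hw : ∀ i ∈ t, 0 ≤ w i)
    (hw1 : ∑ i ∈ t, w i = 1) (hg : ∀ i ∈ t, P i → |g i - c| ≤ δ) :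
    |∑ i ∈ t, w i * g i - c| ≤ δ + ∑ i ∈ t with ¬P i, w i * |g i - c| := by
  have hsplit : ∑ i ∈ t, w i * g i - c =
      ∑ i ∈ t with P i, w i * (g i - c) + ∑ i ∈ t with ¬P i, w i * (g i - c) := by
    rw [sum_filter_add_sum_filter_not]
    simp only [mul_sub, sum_sub_distrib, ← sum_mul, hw1, one_mul]
  have habs : ∀ s ⊆ t, |∑ i ∈ s, w i * (g i - c)| ≤ ∑ i ∈ s, w i * |g i - c| := fun s hs =>
    (abs_sum_le_sum_abs _ _).trans_eq <| sum_congr rfl fun i hi => by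
      rw [abs_mul, abs_of_nonneg (hw i (hs hi))]
  have hgood : ∑ i ∈ t with P i, w i * |g i - c| ≤ δ := calc
    _ ≤ δ * ∑ i ∈ t, w i := sum_filter_mul_le_mul_sum (filter_subset _ _) hw hδ fun i hi =>
        hg i (mem_filter.1 hi).1 (mem_filter.1 hi).2
    _ = δ := by rw [hw1, mul_one]
  rw [hsplit]
  refine (abs_add_le _ _).trans (add_le_add ?_ (habs _ (filter_subset _ _)))
  exact (habs _ (filter_subset _ _)).trans hgood

theorem sum_filter_lt_abs_le_sum_mul_sq_div {ι : Type*} (t : Finset ι) {w x : ι → ℝ} {c : ℝ}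
    (hc : 0 < c) (hw : ∀ i ∈ t, 0 ≤ w i) :
    ∑ i ∈ t with c < |x i|, w i ≤ (∑ i ∈ t, w i * x i ^ 2) / c ^ 2 := by
  rw [le_div_iff₀ (by positivity), sum_mul]
  calc ∑ i ∈ t with c < |x i|, w i * c ^ 2
      ≤ ∑ i ∈ t with c < |x i|, w i * x i ^ 2 := sum_le_sum fun i hi => by
        rw [mem_filter] at hi
        refine mul_le_mul_of_nonneg_left ?_ (hw i hi.1)
        rw [← sq_abs (x i)]
        exact pow_le_pow_left₀ hc.le hi.2.le 2
    _ ≤ ∑ i ∈ t, w i * x i ^ 2 :=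
        sum_le_sum_of_subset_of_nonneg (filter_subset _ _) fun i hi _ =>
          mul_nonneg (hw i hi) (sq_nonneg _)

theorem rpow_le_rpow_abs_of_le_of_inv_le (α : ℝ) {x B : ℝ} (hx : 0 < x) (hxB : x ≤ B)
    (hxB' : x⁻¹ ≤ B) : x ^ α ≤ B ^ |α| := by
  rcases le_or_gt 0 α with hα | hα
  · rw [abs_of_nonneg hα]
    exact Real.rpow_le_rpow hx.le hxB hα
  · rw [abs_of_neg hα, ← inv_inv x, Real.inv_rpow (inv_nonneg.2 hx.le), ← Real.rpow_neg
      (inv_nonneg.2 hx.le)]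
    exact Real.rpow_le_rpow (inv_nonneg.2 hx.le) hxB' (by linarith)

theorem cast_choose_succ_mul_succ (n k : ℕ) :
    ((n + 1).choose (k + 1) : ℝ) * (k + 1) = (n + 1) * n.choose k := by
  exact_mod_cast (Nat.add_one_mul_choose_eq n k).symm

theorem sum_range_cast_choose (p : ℕ) : ∑ s ∈ range (p + 1), (p.choose s : ℝ) = 2 ^ p := by
  exact_mod_cast Nat.sum_range_choose p

theorem two_mul_sum_range_cast_choose_mul (p : ℕ) :
    2 * ∑ s ∈ range (p + 1), (p.choose s : ℝ) * s = p * 2 ^ p := by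
  cases p with
  | zero => simp
  | succ n =>
    rw [sum_range_succ', sum_congr rfl fun k _ => by push_cast; rw [cast_choose_succ_mul_succ],
      ← mul_sum, sum_range_cast_choose]
    push_cast; ring

theorem four_mul_sum_range_cast_choose_mul_mul_sub_one (p : ℕ) :
    4 * ∑ s ∈ range (p + 1), (p.choose s : ℝ) * s * (s - 1) = p * (p - 1) * 2 ^ p := by
  cases p with
  | zero => simp
  | succ n =>
    have hterm : ∀ k : ℕ,
        ((n + 1).choose (k + 1) : ℝ) * ((k + 1 : ℕ) : ℝ) * (((k + 1 : ℕ) : ℝ) - 1) =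
          (n + 1) * ((n.choose k : ℝ) * k) := fun k => by
      push_cast; rw [cast_choose_succ_mul_succ]; ring
    rw [sum_range_succ', sum_congr rfl fun k _ => hterm k, ← mul_sum]
    have := two_mul_sum_range_cast_choose_mul n
    push_cast
    linear_combination (2 * (n + 1 : ℝ)) * this

theorem sum_range_cast_choose_mul_two_mul_sub_sq (p : ℕ) :
    ∑ s ∈ range (p + 1), (p.choose s : ℝ) * (2 * s - p) ^ 2 = (p : ℝ) * 2 ^ p := by
  have h1 := two_mul_sum_range_cast_choose_mul p
  have h2 := four_mul_sum_range_cast_choose_mul_mul_sub_one p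
  have h0 := sum_range_cast_choose p
  have hexp : ∀ s ∈ range (p + 1), (p.choose s : ℝ) * (2 * s - p) ^ 2 =
      4 * ((p.choose s : ℝ) * s * (s - 1)) + (4 - 4 * p) * ((p.choose s : ℝ) * s) +
        (p : ℝ) ^ 2 * p.choose s := fun s _ => by ring
  rw [sum_congr rfl hexp, sum_add_distrib, sum_add_distrib, ← mul_sum, ← mul_sum, ← mul_sum]
  linear_combination h2 + (2 - 2 * (p : ℝ)) * h1 + (p : ℝ) ^ 2 * h0

theorem sum_range_cast_choose_filter_mul_le_le_pow {y : ℝ} (hy0 : 0 < y) (hy1 : y ≤ 1) (k p : ℕ) :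
    ∑ s ∈ range (p + 1) with k * s ≤ p, (p.choose s : ℝ) ≤ ((1 + y ^ k) / y) ^ p := by
  rw [div_pow, le_div_iff₀ (by positivity), sum_mul]
  calc ∑ s ∈ range (p + 1) with k * s ≤ p, (p.choose s : ℝ) * y ^ p
      ≤ ∑ s ∈ range (p + 1) with k * s ≤ p, (p.choose s : ℝ) * (y ^ k) ^ s :=
        sum_le_sum fun s hs => by
          rw [mem_filter] at hs
          rw [← pow_mul]
          exact mul_le_mul_of_nonneg_left (pow_le_pow_of_le_one hy0.le hy1 hs.2) (by positivity)
    _ ≤ ∑ s ∈ range (p + 1), (p.choose s : ℝ) * (y ^ k) ^ s :=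
        sum_le_sum_of_subset_of_nonneg (filter_subset _ _) fun _ _ _ => by positivity
    _ = (1 + y ^ k) ^ p := by
        rw [add_comm 1, add_pow]
        exact sum_congr rfl fun s _ => by ring

theorem sum_range_cast_choose_filter_lt_abs_le {ε : ℝ} (hε : 0 < ε) {p : ℕ} (hp : p ≠ 0) :
    ∑ s ∈ range (p + 1) with ε < |2 * ((s : ℕ) : ℝ) / p - 1|, (p.choose s : ℝ) ≤
      2 ^ p / (ε ^ 2 * p) := by
  have hp' : (p : ℝ) ≠ 0 := Nat.cast_ne_zero.2 hp
  refine (sum_filter_lt_abs_le_sum_mul_sq_div _ hε fun _ _ => by positivity).trans_eq ?_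
  have hscale : ∀ s ∈ range (p + 1), (p.choose s : ℝ) * (2 * s / p - 1) ^ 2 =
      (p.choose s : ℝ) * (2 * s - p) ^ 2 / p ^ 2 := fun s _ => by field_simp
  rw [sum_congr rfl hscale, ← sum_div, sum_range_cast_choose_mul_two_mul_sub_sq]
  field_simp

theorem rpow_two_mul_div_le_two_rpow_abs (α : ℝ) {p s : ℕ} (hsp : s ≤ p) (hps : p < 4 * s) :
    (2 * (s : ℝ) / p) ^ α ≤ 2 ^ |α| := by
  have hs : (0 : ℝ) < s := by norm_cast; omega
  have hp : (0 : ℝ) < p := by norm_cast; omega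
  have hsp' : (s : ℝ) ≤ p := by exact_mod_cast hsp
  have hps' : (p : ℝ) < 4 * s := by exact_mod_cast hps
  apply rpow_le_rpow_abs_of_le_of_inv_le α (by positivity)
  · rw [div_le_iff₀ hp]; linarith
  · rw [inv_div, div_le_iff₀ (by positivity)]; linarith

theorem rpow_two_mul_div_le_pow_ceil_abs (α : ℝ) {p s : ℕ} (hp : 2 ≤ p) (hsp : s ≤ p) :
    (2 * (s : ℝ) / p) ^ α ≤ (p : ℝ) ^ ⌈|α|⌉₊ := by
  have hp' : (2 : ℝ) ≤ p := by exact_mod_cast hp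
  rcases Nat.eq_zero_or_pos s with rfl | hs
  · simpa using (Real.zero_rpow_le_one α).trans (one_le_pow₀ (by linarith))
  have hs' : (1 : ℝ) ≤ s := by exact_mod_cast hs
  have hsp' : (s : ℝ) ≤ p := by exact_mod_cast hsp
  calc (2 * (s : ℝ) / p) ^ α ≤ (p : ℝ) ^ |α| := by
        apply rpow_le_rpow_abs_of_le_of_inv_le α (by positivity)
        · rw [div_le_iff₀ (by positivity)]; nlinarith
        · rw [inv_div, div_le_iff₀ (by positivity)]; nlinarith
    _ ≤ (p : ℝ) ^ (⌈|α|⌉₊ : ℝ) := Real.rpow_le_rpow_of_exponent_le (by linarith) (Nat.le_ceil _)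
    _ = (p : ℝ) ^ ⌈|α|⌉₊ := Real.rpow_natCast _ _

theorem sum_filter_not_binomial_mul_abs_rpow_sub_one_le (α : ℝ) {ε : ℝ} (hε : 0 < ε) {p : ℕ}
    (hp : 2 ≤ p) :
    ∑ s ∈ range (p + 1) with ¬|2 * ((s : ℕ) : ℝ) / p - 1| ≤ ε,
        (p.choose s : ℝ) / 2 ^ p * |(2 * (s : ℝ) / p) ^ α - 1| ≤
      (2 ^ |α| + 1) / (ε ^ 2 * p) + ((p : ℝ) ^ ⌈|α|⌉₊ + 1) * (337 / 384) ^ p := by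
  have hw : ∀ s ∈ range (p + 1), (0 : ℝ) ≤ p.choose s / 2 ^ p := fun _ _ => by positivity
  have hle : ∀ s ∈ range (p + 1), s ≤ p := fun s hs => Nat.lt_succ_iff.1 (mem_range.1 hs)
  have habs : ∀ s : ℕ, |(2 * (s : ℝ) / p) ^ α - 1| ≤ (2 * (s : ℝ) / p) ^ α + 1 := fun s =>
    abs_le.2 ⟨by linarith [Real.rpow_nonneg (by positivity : (0 : ℝ) ≤ 2 * s / p) α], by linarith⟩
  rw [← sum_filter_add_sum_filter_not _ (fun s => 4 * s ≤ p), filter_filter, filter_filter,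
    add_comm]
  gcongr
  · calc _ ≤ (2 ^ |α| + 1) * ∑ s ∈ range (p + 1) with ¬|2 * ((s : ℕ) : ℝ) / p - 1| ≤ ε,
            (p.choose s : ℝ) / 2 ^ p := by
          refine sum_filter_mul_le_mul_sum ?_ (fun s hs => hw s (mem_filter.1 hs).1)
            (by positivity) fun s hs => ?_
          · exact monotone_filter_right _ fun _ _ => And.left
          · obtain ⟨hs, -, hps⟩ := mem_filter.1 hs
            linarith [habs s, rpow_two_mul_div_le_two_rpow_abs α (hle s hs) (not_le.1 hps)]
      _ ≤ (2 ^ |α| + 1) * (2 ^ p / (ε ^ 2 * p) / 2 ^ p) := by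
          rw [← sum_div]
          gcongr
          simp only [not_le]
          exact sum_range_cast_choose_filter_lt_abs_le hε (by omega)
      _ = (2 ^ |α| + 1) / (ε ^ 2 * p) := by field_simp
  · calc _ ≤ ((p : ℝ) ^ ⌈|α|⌉₊ + 1) * ∑ s ∈ range (p + 1) with 4 * s ≤ p,
            (p.choose s : ℝ) / 2 ^ p := by
          refine sum_filter_mul_le_mul_sum ?_ (fun s hs => hw s (mem_filter.1 hs).1)
            (by positivity) fun s hs => ?_
          · exact monotone_filter_right _ fun _ _ => And.right
          · have hs := (mem_filter.1 hs).1
            linarith [habs s, rpow_two_mul_div_le_pow_ceil_abs α hp (hle s hs)]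
      _ ≤ ((p : ℝ) ^ ⌈|α|⌉₊ + 1) * ((337 / 192) ^ p / 2 ^ p) := by
          -- `(1 + y ^ 4) / y = 337 / 192` at `y = 3 / 4`
          rw [← sum_div]
          gcongr
          exact (sum_range_cast_choose_filter_mul_le_le_pow (y := 3 / 4) (by norm_num) (by norm_num)
            4 p).trans_eq (by norm_num)
      _ = ((p : ℝ) ^ ⌈|α|⌉₊ + 1) * (337 / 384) ^ p := by
          rw [← div_pow]; norm_num

theorem tendsto_binomial_tail_bound (α ε : ℝ) :
    Tendsto (fun p : ℕ => (2 ^ |α| + 1) / (ε ^ 2 * p) + ((p : ℝ) ^ ⌈|α|⌉₊ + 1) * (337 / 384) ^ p)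
      atTop (𝓝 0) := by
  have hr : |(337 / 384 : ℝ)| < 1 := by norm_num [abs_of_pos]
  have hchebyshev := tendsto_const_div_atTop_nhds_zero_nat ((2 ^ |α| + 1) / ε ^ 2)
  have hchernoff := (tendsto_pow_const_mul_const_pow_of_abs_lt_one ⌈|α|⌉₊ hr).add
    (tendsto_pow_atTop_nhds_zero_of_lt_one (by norm_num) (by norm_num : (337 / 384 : ℝ) < 1))
  simpa only [div_div, add_mul, one_mul, add_zero] using hchebyshev.add hchernoff

theorem one_div_two_pow_mul_sum_div_rpow (α : ℝ) (p : ℕ) :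
    (1 / 2 ^ p * ∑ s ∈ range (p + 1), (p.choose s : ℝ) * (s : ℝ) ^ α) / ((p : ℝ) / 2) ^ α =
      ∑ s ∈ range (p + 1), (p.choose s : ℝ) / 2 ^ p * (2 * (s : ℝ) / p) ^ α := by
  rw [mul_div_assoc, sum_div, mul_sum]
  refine sum_congr rfl fun s _ => ?_
  rw [mul_div_assoc, ← Real.div_rpow (by positivity) (by positivity), div_div_eq_mul_div,
    mul_comm (s : ℝ)]
  ring

theorem eventually_abs_sum_binomial_mul_rpow_sub_one_lt (α : ℝ) {δ : ℝ} (hδ : 0 < δ) :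
    ∀ᶠ p : ℕ in atTop,
      |∑ s ∈ range (p + 1), (p.choose s : ℝ) / 2 ^ p * (2 * (s : ℝ) / p) ^ α - 1| < δ := by
  obtain ⟨ε, hε, hcont⟩ := Metric.continuousAt_iff.1
    (Real.continuousAt_rpow_const 1 α (Or.inl one_ne_zero)) (δ / 2) (half_pos hδ)
  have hwindow : ∀ x : ℝ, |x - 1| ≤ ε / 2 → |x ^ α - 1| ≤ δ / 2 := fun x hx => by
    have := @hcont x (by rw [Real.dist_eq]; linarith)
    rw [Real.dist_eq, Real.one_rpow] at this
    exact this.le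
  filter_upwards [eventually_ge_atTop 2,
    (tendsto_binomial_tail_bound α (ε / 2)).eventually_lt_const (half_pos hδ)] with p hp htail
  have hw1 : ∑ s ∈ range (p + 1), (p.choose s : ℝ) / 2 ^ p = 1 := by
    rw [← sum_div, sum_range_cast_choose, div_self (by positivity)]
  calc _ ≤ δ / 2 + ∑ s ∈ range (p + 1) with ¬|2 * ((s : ℕ) : ℝ) / p - 1| ≤ ε / 2,
          (p.choose s : ℝ) / 2 ^ p * |(2 * (s : ℝ) / p) ^ α - 1| :=
        abs_sum_mul_sub_le_add_sum_filter_not _ _ (by positivity) (fun _ _ => by positivity) hw1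
          fun s _ hs => hwindow _ hs
    _ ≤ δ / 2 + ((2 ^ |α| + 1) / ((ε / 2) ^ 2 * p) +
          ((p : ℝ) ^ ⌈|α|⌉₊ + 1) * (337 / 384) ^ p) := by
        gcongr
        exact sum_filter_not_binomial_mul_abs_rpow_sub_one_le α (half_pos hε) hp
    _ < δ := by linarith

/-- here `(s : ℝ) ^ α` is the real power, so the `s = 0` term
contributes `0` when `α ≠ 0`. -/
theorem stmt15 (α : ℝ) :
    Tendsto
      (fun p : ℕ =>
        ((1 / 2 ^ p) * ∑ s ∈ Finset.range (p + 1), (p.choose s : ℝ) * (s : ℝ) ^ α) /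
          ((p : ℝ) / 2) ^ α)
      atTop (nhds 1) := by
  simp only [one_div_two_pow_mul_sum_div_rpow]
  exact Metric.tendsto_nhds.2 fun δ hδ => by
    simpa only [Real.dist_eq] using eventually_abs_sum_binomial_mul_rpow_sub_one_lt α hδ
end

section
/- For all M, N ≥ 2, δ_p(M,N) → 0 as p → ∞. -/
/-!
If the two multisets agree, they contain `(0, 0)` equally often, so the difference `k(a, b)`
of the two counts vanishes. Detecting `k ≡ 0 (mod L)` with the characters `ψ` of `ℤ/L` gives
`L · #{k = 0} ≤ ∑_ψ |∑_{a,b} ψ(k(a, b))|`. Summing out `a` first, the sum for `ψ` factors along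
the cycle into `tr (T_ψ ^ p)` for an `N × N` transfer matrix `T_ψ` whose entries have modulus at
most `M`; for `ψ ≠ 1` every row of `T_ψ` also has an entry `ψ(±1) + (M - 1)` of modulus `< M`,
so `‖T_ψ‖_∞ < MN`. Hence `L · δ_p ≤ 1 + N ∑_{ψ ≠ 1} (‖T_ψ‖_∞ / MN)^p → 1`, and
`limsup δ_p ≤ 1 / L` for every `L`.
-/

open Finset Filter Topology
open scoped Matrix.Norms.Operator

theorem cyc_eq_add_one {p : ℕ} [NeZero p] (y : Fin p) : cyc p y = y + 1 := by
  ext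
  simp [cyc, Fin.val_add]

theorem AddChar.map_sum_eq_prod {ι A M : Type*} [AddCommMonoid A] [CommMonoid M]
    (ψ : AddChar A M) (s : Finset ι) (f : ι → A) :
    ψ (∑ i ∈ s, f i) = ∏ i ∈ s, ψ (f i) :=
  map_prod ψ.toMonoidHom (fun i ↦ Multiplicative.ofAdd (f i)) s

theorem Fintype.sum_comp_eq_of_map_eq {ι β R : Type*} [Fintype ι] [AddCommMonoid R]
    {f g : ι → β} (hfg : univ.val.map f = univ.val.map g) (h : β → R) :
    ∑ i, h (f i) = ∑ i, h (g i) := by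
  rw [sum_eq_multiset_sum, sum_eq_multiset_sum, ← Function.comp_def h f,
    ← Function.comp_def h g, ← Multiset.map_map, ← Multiset.map_map, hfg]

theorem Fin.cons_apply_add_one {α : Type*} {n : ℕ} (i : α) (x : Fin n → α)
    (y : Fin (n + 1)) :
    (Fin.cons i x : Fin (n + 1) → α) (y + 1) = (Fin.snoc x i : Fin (n + 1) → α) y := by
  induction y using Fin.lastCases with
  | last => simp
  | cast z => simp [Fin.coeSucc_eq_succ]

namespace Matrix

section Semiring
variable {α R : Type*} [Fintype α] [DecidableEq α] [CommSemiring R]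

theorem pow_succ_apply_eq_sum_prod (G : Matrix α α R) (n : ℕ) (i j : α) :
    (G ^ (n + 1)) i j =
      ∑ x : Fin n → α, ∏ y : Fin (n + 1),
        G ((Fin.cons i x : Fin (n + 1) → α) y) ((Fin.snoc x j : Fin (n + 1) → α) y) := by
  induction n generalizing j with
  | zero => simp [Fin.snoc]
  | succ n ih =>
    rw [pow_succ, mul_apply, ← (Fin.snocEquiv fun _ ↦ α).sum_comp, Fintype.sum_prod_type]
    refine sum_congr rfl fun k _ ↦ ?_
    rw [ih, sum_mul]
    refine sum_congr rfl fun x _ ↦ ?_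
    simp [Fin.snocEquiv, Fin.prod_univ_castSucc, Fin.cons_snoc_eq_snoc_cons]

theorem trace_pow_eq_sum_prod (G : Matrix α α R) (p : ℕ) [NeZero p] :
    trace (G ^ p) = ∑ b : Fin p → α, ∏ y, G (b y) (b (y + 1)) := by
  obtain ⟨n, rfl⟩ : ∃ n, p = n + 1 := Nat.exists_eq_succ_of_ne_zero (NeZero.ne p)
  rw [← (Fin.consEquiv fun _ ↦ α).sum_comp, Fintype.sum_prod_type, trace]
  refine sum_congr rfl fun i _ ↦ ?_
  simp [pow_succ_apply_eq_sum_prod, Fin.consEquiv, Fin.cons_apply_add_one]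

end Semiring

section NormedRing

variable {α 𝕜 : Type*} [Fintype α] [NormedRing 𝕜]

theorem norm_apply_le_linfty_opNorm (B : Matrix α α 𝕜) (i j : α) :
    ‖B i j‖ ≤ ‖B‖ := by
  change ‖B i j‖₊ ≤ ‖B‖₊
  rw [linfty_opNNNorm_def]
  exact (single_le_sum (fun _ _ ↦ zero_le) (mem_univ j)).trans
    (le_sup (f := fun i ↦ ∑ k, ‖B i k‖₊) (mem_univ i))

theorem norm_trace_le_card_mul_linfty_opNorm (B : Matrix α α 𝕜) :
    ‖trace B‖ ≤ Fintype.card α * ‖B‖ :=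
  (norm_sum_le _ _).trans <| by
    simpa using sum_le_sum fun i (_ : i ∈ univ) ↦ norm_apply_le_linfty_opNorm B i i

end NormedRing

end Matrix

theorem AddChar.card_mul_card_filter_eq_zero_le {X A : Type*} [Fintype X] [AddCommGroup A]
    [Fintype A] [DecidableEq A] (f : X → A) :
    (Fintype.card A * #{x | f x = 0} : ℝ) ≤ ∑ ψ : AddChar A ℂ, ‖∑ x, ψ (f x)‖ := by
  have h : ∑ ψ : AddChar A ℂ, ∑ x, ψ (f x) = (Fintype.card A * #{x | f x = 0} : ℕ) := by
    rw [sum_comm]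
    simp [AddChar.sum_apply_eq_ite, sum_ite, mul_comm]
  calc (Fintype.card A * #{x | f x = 0} : ℝ)
      = ‖∑ ψ : AddChar A ℂ, ∑ x, ψ (f x)‖ := by
        rw [h, Complex.norm_natCast, Nat.cast_mul]
    _ ≤ _ := norm_sum_le _ _

theorem Complex.norm_add_ofReal_lt {u : ℂ} (hu : ‖u‖ = 1) (hu1 : u ≠ 1) {c : ℝ}
    (hc : 0 < c) :
    ‖u + c‖ < 1 + c := by
  have hc' : ‖(c : ℂ)‖ = c := by rw [Complex.norm_real, Real.norm_of_nonneg hc.le]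
  refine ((norm_add_le _ _).trans_eq (by rw [hu, hc'])).lt_of_ne fun h ↦ hu1 ?_
  have := (norm_add_eq_iff_real (F := ℂ)).1 (h.trans (by rw [hu, hc']))
  rw [hc', hu, one_smul, Complex.real_smul] at this
  exact mul_left_cancel₀ (Complex.ofReal_ne_zero.2 hc.ne') (this.trans (mul_one _).symm)

def transferMatrix (M N : ℕ) [NeZero M] {L : ℕ} (ψ : AddChar (ZMod L) ℂ) :
    Matrix (ZMod N) (ZMod N) ℂ :=
  .of fun v v' ↦ ∑ m : ZMod M, ψ ((if (m, v) = 0 then 1 else 0) - if (m, v') = 0 then 1 else 0)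

variable {M N L : ℕ}

def zeroCountDiff (L : ℕ) {p : ℕ} (a : Fin p → ZMod M) (b : Fin p → ZMod N) : ZMod L :=
  ∑ y, ((if (a y, b y) = 0 then 1 else 0) - if (a y, b (cyc p y)) = 0 then 1 else 0)

theorem zeroCountDiff_eq_zero_of_map_eq {p : ℕ} {a : Fin p → ZMod M} {b : Fin p → ZMod N}
    (hab : (univ.val.map fun y ↦ (a y, b y)) = univ.val.map fun y ↦ (a y, b (cyc p y))) :
    zeroCountDiff L a b = 0 := by
  rw [zeroCountDiff, sum_sub_distrib, sub_eq_zero]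
  exact Fintype.sum_comp_eq_of_map_eq hab fun z ↦ if z = 0 then 1 else 0

section
variable [NeZero M]

theorem sum_zeroCountDiff_eq_trace [NeZero N] (ψ : AddChar (ZMod L) ℂ) (p : ℕ) [NeZero p] :
    ∑ x : (Fin p → ZMod M) × (Fin p → ZMod N), ψ (zeroCountDiff L x.1 x.2) =
      (transferMatrix M N ψ ^ p).trace := by
  rw [Matrix.trace_pow_eq_sum_prod, Fintype.sum_prod_type, sum_comm]
  refine sum_congr rfl fun b _ ↦ ?_
  simp only [zeroCountDiff, AddChar.map_sum_eq_prod, cyc_eq_add_one, transferMatrix,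
    Matrix.of_apply, Fintype.prod_sum]

theorem transferMatrix_apply (ψ : AddChar (ZMod L) ℂ) (v v' : ZMod N) :
    transferMatrix M N ψ v v' =
      ψ ((if v = 0 then 1 else 0) - if v' = 0 then 1 else 0) + ((M - 1 : ℝ) : ℂ) := by
  rw [transferMatrix, Matrix.of_apply, ← add_sum_erase _ _ (mem_univ 0)]
  have : ∀ m ∈ univ.erase (0 : ZMod M),
      ψ ((if (m, v) = 0 then 1 else 0) - if (m, v') = 0 then 1 else 0) = 1 := fun m hm ↦ by
    simp [(mem_erase.1 hm).1]
  rw [sum_congr rfl this]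
  simp [card_erase_of_mem, Nat.cast_sub NeZero.one_le]

variable [NeZero L]

theorem norm_transferMatrix_apply_le (ψ : AddChar (ZMod L) ℂ) (v v' : ZMod N) :
    ‖transferMatrix M N ψ v v'‖ ≤ M :=
  (norm_sum_le _ _).trans (by simp)

theorem norm_transferMatrix_apply_lt (hM : 2 ≤ M) {ψ : AddChar (ZMod L) ℂ} {v v' : ZMod N}
    (h : ψ ((if v = 0 then 1 else 0) - if v' = 0 then 1 else 0) ≠ 1) :
    ‖transferMatrix M N ψ v v'‖ < M := by
  rw [transferMatrix_apply]
  have hM₁ : (1 : ℝ) < M := by exact_mod_cast hM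
  simpa using Complex.norm_add_ofReal_lt (AddChar.norm_apply _ _) h (sub_pos.2 hM₁)

theorem norm_transferMatrix_lt [NeZero N] (hM : 2 ≤ M) (hN : 2 ≤ N) {ψ : AddChar (ZMod L) ℂ}
    (hψ : ψ ≠ 0) : ‖transferMatrix M N ψ‖ < M * N := by
  have : Fact (1 < N) := ⟨hN⟩
  have hψ1 : ψ 1 ≠ 1 := (AddChar.zmod_char_ne_one_iff L ψ).1 hψ
  have hrow (v : ZMod N) :
      ∃ v' : ZMod N, ψ ((if v = 0 then 1 else 0) - if v' = 0 then 1 else 0) ≠ 1 := by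
    by_cases hv : v = 0
    · exact ⟨1, by simpa [hv] using hψ1⟩
    · exact ⟨0, by simpa [hv, AddChar.map_neg_eq_inv] using hψ1⟩
  change (‖transferMatrix M N ψ‖₊ : ℝ) < M * N
  suffices ‖transferMatrix M N ψ‖₊ < M * N by exact_mod_cast this
  rw [Matrix.linfty_opNNNorm_def, Finset.sup_lt_iff (by positivity)]
  intro v _
  obtain ⟨v', hv'⟩ := hrow v
  calc ∑ w, ‖transferMatrix M N ψ v w‖₊ < ∑ _w : ZMod N, (M : NNReal) :=
        sum_lt_sum (fun w _ ↦ norm_transferMatrix_apply_le ψ v w)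
          ⟨v', mem_univ _, norm_transferMatrix_apply_lt hM hv'⟩
    _ = M * N := by simp [mul_comm]

end

section
variable [NeZero M] [NeZero N]

theorem card_mul_card_zeroCountDiff_eq_zero_le (L : ℕ) [NeZero L] (p : ℕ) [NeZero p] :
    (L : ℝ) * #{x : (Fin p → ZMod M) × (Fin p → ZMod N) | zeroCountDiff L x.1 x.2 = 0} ≤
      ((M : ℝ) * N) ^ p +
        N * ∑ ψ ∈ univ.erase (0 : AddChar (ZMod L) ℂ), ‖transferMatrix M N ψ‖ ^ p := by
  set X := (Fin p → ZMod M) × (Fin p → ZMod N)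
  have hchar (ψ : AddChar (ZMod L) ℂ) :
      ‖∑ x : X, ψ (zeroCountDiff L x.1 x.2)‖ ≤ N * ‖transferMatrix M N ψ‖ ^ p := by
    rw [sum_zeroCountDiff_eq_trace]
    refine (Matrix.norm_trace_le_card_mul_linfty_opNorm _).trans ?_
    rw [ZMod.card]
    gcongr
    exact norm_pow_le' _ (NeZero.pos p)
  calc (L : ℝ) * #{x : X | zeroCountDiff L x.1 x.2 = 0}
      ≤ ∑ ψ : AddChar (ZMod L) ℂ, ‖∑ x : X, ψ (zeroCountDiff L x.1 x.2)‖ := by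
        simpa using AddChar.card_mul_card_filter_eq_zero_le fun x : X ↦ zeroCountDiff L x.1 x.2
    _ = ((M : ℝ) * N) ^ p +
          ∑ ψ ∈ univ.erase (0 : AddChar (ZMod L) ℂ),
            ‖∑ x : X, ψ (zeroCountDiff L x.1 x.2)‖ := by
        rw [← add_sum_erase _ _ (mem_univ 0)]
        simp [X, mul_pow]
    _ ≤ _ := by
        rw [mul_sum]
        gcongr with ψ
        exact hchar ψ

theorem mul_delta_le (L : ℕ) [NeZero L] (p : ℕ) [NeZero p] :
    L * delta M N p ≤
      1 + N * ∑ ψ ∈ univ.erase (0 : AddChar (ZMod L) ℂ),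
        (‖transferMatrix M N ψ‖ / (M * N)) ^ p := by
  have hgood : Nat.card {x : (Fin p → ZMod M) × (Fin p → ZMod N) //
      (univ.val.map fun y ↦ (x.1 y, x.2 y)) = univ.val.map fun y ↦ (x.1 y, x.2 (cyc p y))} ≤
      #{x : (Fin p → ZMod M) × (Fin p → ZMod N) | zeroCountDiff L x.1 x.2 = 0} := by
    rw [Nat.card_eq_fintype_card, Fintype.card_subtype]
    exact card_le_card <| monotone_filter_right _ fun x _ ↦ zeroCountDiff_eq_zero_of_map_eq
  have hD : (0 : ℝ) < ((M : ℝ) * N) ^ p := pow_pos (by simp [NeZero.pos]) p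
  rw [delta, mul_div_assoc', div_le_iff₀ hD, add_mul, one_mul, mul_assoc, sum_mul]
  simp_rw [div_pow, div_mul_cancel₀ _ hD.ne']
  exact (mul_le_mul_of_nonneg_left (mod_cast hgood) (Nat.cast_nonneg L)).trans
    (card_mul_card_zeroCountDiff_eq_zero_le L p)

end

theorem delta_nonneg (M N p : ℕ) : 0 ≤ delta M N p := by
  unfold delta
  positivity

theorem stmt16 (M N : ℕ) (hM : 2 ≤ M) (hN : 2 ≤ N) :
    Filter.Tendsto (fun p => delta M N p) Filter.atTop (nhds 0) := by
  have : NeZero M := ⟨by omega⟩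
  have : NeZero N := ⟨by omega⟩
  refine tendsto_order.2 ⟨fun a ha ↦ .of_forall fun p ↦ ha.trans_le (delta_nonneg M N p),
    fun ε hε ↦ ?_⟩
  obtain ⟨L, hL⟩ := exists_nat_one_div_lt hε
  set ψs := univ.erase (0 : AddChar (ZMod (L + 1)) ℂ)
  set r : AddChar (ZMod (L + 1)) ℂ → ℝ := fun ψ ↦ ‖transferMatrix M N ψ‖ / (M * N)
  have hr : ∀ ψ ∈ ψs, Tendsto (fun p ↦ r ψ ^ p) atTop (𝓝 0) := fun ψ hψ ↦
    tendsto_pow_atTop_nhds_zero_of_lt_one (by positivity)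
      ((div_lt_one (by positivity)).2 (norm_transferMatrix_lt hM hN (ne_of_mem_erase hψ)))
  have hbound : Tendsto (fun p ↦ (1 + N * ∑ ψ ∈ ψs, r ψ ^ p) / (L + 1 : ℕ)) atTop
      (𝓝 ((1 + N * ∑ ψ ∈ ψs, (0 : ℝ)) / (L + 1 : ℕ))) :=
    ((tendsto_finsetSum ψs hr).const_mul _ |>.const_add _).div_const _
  filter_upwards [hbound.eventually_lt_const (by simpa using hL), eventually_ge_atTop 1]
    with p hp hp1
  have : NeZero p := ⟨by omega⟩
  refine lt_of_le_of_lt ?_ hp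
  rw [le_div_iff₀ (by positivity), mul_comm]
  exact mul_delta_le (L + 1) p
end
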